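/- arXiv:1702.05703 — 3 statements merged into one kernel-verified Lean document; each statement's English description precedes it below -/
import Mathlib

section
/- Let D and D' be division rings and let m, n, m', n' ≥ 2 be integers. If φ : D^{m×n} → D'^{m'×n'} is an additive graph homomorphism that is degenerate, then φ is a (vertex) colouring. -/
open Matrix Function

/-- The rank of a matrix over a division ring: the dimension of its left row space. -/
noncomputable def rk {D : Type*} [DivisionRing D] {m n : ℕ}
    (A : Matrix (Fin m) (Fin n) D) : ℕ :=
  Module.finrank D (Submodule.span D (Set.range fun i => A i))

/-- A nonempty set of matrices, any two distinct members of which are adjacent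
(`rk (A - B) = 1`). -/
def IsAdjSet {D : Type*} [DivisionRing D] {m n : ℕ}
    (S : Set (Matrix (Fin m) (Fin n) D)) : Prop :=
  S.Nonempty ∧ ∀ A ∈ S, ∀ B ∈ S, A ≠ B → rk (A - B) = 1

/-- A maximal set: an adjacent set which is maximal under inclusion. -/
def IsMaxSet {D : Type*} [DivisionRing D] {m n : ℕ}
    (S : Set (Matrix (Fin m) (Fin n) D)) : Prop :=
  IsAdjSet S ∧ ∀ T : Set (Matrix (Fin m) (Fin n) D), IsAdjSet T → S ⊆ T → T = S

/-- `M₁`: matrices whose rows other than the first are zero. -/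
def M1set (D : Type*) [DivisionRing D] (m n : ℕ) : Set (Matrix (Fin m) (Fin n) D) :=
  {X | ∀ (i : Fin m) (j : Fin n), (i : ℕ) ≠ 0 → X i j = 0}

/-- `N₁`: matrices whose columns other than the first are zero. -/
def N1set (D : Type*) [DivisionRing D] (m n : ℕ) : Set (Matrix (Fin m) (Fin n) D) :=
  {X | ∀ (i : Fin m) (j : Fin n), (j : ℕ) ≠ 0 → X i j = 0}

/-- A maximal set of type one: `P·M₁ + A` with `P` invertible. -/
def IsTypeOne {D : Type*} [DivisionRing D] {m n : ℕ}
    (S : Set (Matrix (Fin m) (Fin n) D)) : Prop :=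
  ∃ (P : Matrix (Fin m) (Fin m) D) (A : Matrix (Fin m) (Fin n) D),
    IsUnit P ∧ S = (fun X => P * X + A) '' M1set D m n

/-- A maximal set of type two: `N₁·Q + A` with `Q` invertible. -/
def IsTypeTwo {D : Type*} [DivisionRing D] {m n : ℕ}
    (S : Set (Matrix (Fin m) (Fin n) D)) : Prop :=
  ∃ (Q : Matrix (Fin n) (Fin n) D) (A : Matrix (Fin m) (Fin n) D),
    IsUnit Q ∧ S = (fun X => X * Q + A) '' N1set D m n

/-- Two maximal sets of different types. -/
def DiffTypes {D : Type*} [DivisionRing D] {m n : ℕ}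
    (M N : Set (Matrix (Fin m) (Fin n) D)) : Prop :=
  (IsTypeOne M ∧ IsTypeTwo N) ∨ (IsTypeTwo M ∧ IsTypeOne N)

/-- The unit ball `B_A = D^{m×n}_{≤1} + A`. -/
def uball {D : Type*} [DivisionRing D] {m n : ℕ}
    (A : Matrix (Fin m) (Fin n) D) : Set (Matrix (Fin m) (Fin n) D) :=
  {X | rk (X - A) ≤ 1}

/-- A graph homomorphism: adjacency-preserving map. -/
def IsGraphHom {D D' : Type*} [DivisionRing D] [DivisionRing D'] {m n m' n' : ℕ}
    (φ : Matrix (Fin m) (Fin n) D → Matrix (Fin m') (Fin n') D') : Prop :=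
  ∀ A B, rk (A - B) = 1 → rk (φ A - φ B) = 1

/-- A degenerate graph homomorphism. -/
def Degenerate {D D' : Type*} [DivisionRing D] [DivisionRing D'] {m n m' n' : ℕ}
    (φ : Matrix (Fin m) (Fin n) D → Matrix (Fin m') (Fin n') D') : Prop :=
  ∃ (A : Matrix (Fin m) (Fin n) D) (M N : Set (Matrix (Fin m') (Fin n') D')),
    rk A ≤ 1 ∧ DiffTypes M N ∧ φ '' uball A ⊆ M ∪ N ∧ φ A ∈ M ∩ N

/-- A (vertex) colouring: the image is an adjacent set. -/
def IsColouring {D D' : Type*} [DivisionRing D] [DivisionRing D'] {m n m' n' : ℕ}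
    (φ : Matrix (Fin m) (Fin n) D → Matrix (Fin m') (Fin n') D') : Prop :=
  IsAdjSet (Set.range φ)

/-- A nonzero ring homomorphism. -/
def IsRingHomNZ {D D' : Type*} [DivisionRing D] [DivisionRing D'] (τ : D → D') : Prop :=
  (∀ x y, τ (x + y) = τ x + τ y) ∧ (∀ x y, τ (x * y) = τ x * τ y) ∧ τ ≠ 0

/-- A nonzero ring anti-homomorphism. -/
def IsAntiRingHomNZ {D D' : Type*} [DivisionRing D] [DivisionRing D'] (σ : D → D') : Prop :=
  (∀ x y, σ (x + y) = σ x + σ y) ∧ (∀ x y, σ (x * y) = σ y * σ x) ∧ σ ≠ 0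

/-- The `m × n` matrix with the matrix `Y` in the upper-left corner and zeros elsewhere. -/
def corner {D : Type*} [Zero D] {k l m n : ℕ} (Y : Matrix (Fin k) (Fin l) D) :
    Matrix (Fin m) (Fin n) D :=
  Matrix.of fun i j =>
    if hi : (i : ℕ) < k then if hj : (j : ℕ) < l then Y ⟨i, hi⟩ ⟨j, hj⟩ else 0 else 0

/-- A line of the affine geometry `AG(M)` of a maximal set `M`: a nonempty intersection
`M ∩ N` with `N` a maximal set of the other type. -/
def IsLine {D : Type*} [DivisionRing D] {m n : ℕ}
    (M ℓ : Set (Matrix (Fin m) (Fin n) D)) : Prop :=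
  ∃ N : Set (Matrix (Fin m) (Fin n) D), DiffTypes M N ∧ (M ∩ N).Nonempty ∧ ℓ = M ∩ N

/-- Condition (I). -/
def CondI {D D' : Type*} [DivisionRing D] [DivisionRing D'] {m n m' n' : ℕ}
    (φ : Matrix (Fin m) (Fin n) D → Matrix (Fin m') (Fin n') D') : Prop :=
  ∀ M N : Set (Matrix (Fin m) (Fin n) D), DiffTypes M N → (0 : Matrix (Fin m) (Fin n) D) ∈ M ∩ N →
    ∃ M' N' : Set (Matrix (Fin m') (Fin n') D'),
      DiffTypes M' N' ∧ φ '' M ⊆ M' ∧ φ '' N ⊆ N'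

/-- Condition (i) of the additive homomorphism theorem: `φ(X) = P X^τ Q`. -/
def Cond1 {D D' : Type*} [DivisionRing D] [DivisionRing D'] {m n m' n' : ℕ}
    (φ : Matrix (Fin m) (Fin n) D → Matrix (Fin m') (Fin n') D') : Prop :=
  ∃ (P : Matrix (Fin m') (Fin m) D') (Q : Matrix (Fin n) (Fin n') D') (τ : D → D'),
    2 ≤ rk P ∧ 2 ≤ rk Q ∧ IsRingHomNZ τ ∧ ∀ X, φ X = P * X.map τ * Q

/-- Condition (ii) of the additive homomorphism theorem: `φ(X) = P (ᵗX^σ) Q`. -/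
def Cond2 {D D' : Type*} [DivisionRing D] [DivisionRing D'] {m n m' n' : ℕ}
    (φ : Matrix (Fin m) (Fin n) D → Matrix (Fin m') (Fin n') D') : Prop :=
  ∃ (P : Matrix (Fin m') (Fin n) D') (Q : Matrix (Fin m) (Fin n') D') (σ : D → D'),
    2 ≤ rk P ∧ 2 ≤ rk Q ∧ IsAntiRingHomNZ σ ∧ ∀ X, φ X = P * (X.map σ)ᵀ * Q


section auxlemmas
open Submodule
variable {K : Type*} [DivisionRing K] {m n : ℕ}



lemma vecMulVec_row (a : Fin m → K) (b : Fin n → K) (i : Fin m) :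
    vecMulVec a b i = a i • b := by
  funext j; simp [vecMulVec_apply, Pi.smul_apply, smul_eq_mul]

lemma rk_vecMulVec_le (a : Fin m → K) (b : Fin n → K) : rk (vecMulVec a b) ≤ 1 := by
  have hle : span K (Set.range fun i => vecMulVec a b i) ≤ span K ({b} : Set (Fin n → K)) := by
    rw [span_le]
    rintro _ ⟨i, rfl⟩
    show vecMulVec a b i ∈ _
    rw [vecMulVec_row]
    exact smul_mem _ _ (mem_span_singleton_self b)
  have h2 : Module.finrank K (span K ({b} : Set (Fin n → K))) ≤ 1 := by
    by_cases hb : b = 0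
    · subst hb
      rw [Submodule.span_zero_singleton]
      simp
    · rw [finrank_span_singleton hb]
  exact le_trans (Submodule.finrank_mono hle) h2

lemma one_le_rk {A : Matrix (Fin m) (Fin n) K} (h : A ≠ 0) : 1 ≤ rk A := by
  have : ∃ i, A i ≠ 0 := by
    by_contra hc
    push_neg at hc
    exact h (by ext i j; rw [hc i]; rfl)
  obtain ⟨i, hi⟩ := this
  have hle : span K ({A i} : Set (Fin n → K)) ≤ span K (Set.range fun i => A i) :=
    span_le.2 (by rintro _ rfl; exact subset_span ⟨i, rfl⟩)
  calc 1 = Module.finrank K (span K ({A i} : Set (Fin n → K))) := (finrank_span_singleton hi).symm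
    _ ≤ rk A := Submodule.finrank_mono hle

lemma vecMulVec_ne_zero {a : Fin m → K} {b : Fin n → K} (ha : a ≠ 0) (hb : b ≠ 0) :
    vecMulVec a b ≠ 0 := by
  obtain ⟨i, hi⟩ := Function.ne_iff.1 ha
  obtain ⟨j, hj⟩ := Function.ne_iff.1 hb
  intro h
  have := congrFun (congrFun h i) j
  simp [vecMulVec_apply] at this
  tauto

lemma rk_vecMulVec {a : Fin m → K} {b : Fin n → K} (ha : a ≠ 0) (hb : b ≠ 0) :
    rk (vecMulVec a b) = 1 :=
  le_antisymm (rk_vecMulVec_le a b) (one_le_rk (vecMulVec_ne_zero ha hb))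

lemma exists_of_rk_le_one {A : Matrix (Fin m) (Fin n) K} (h : rk A ≤ 1) :
    ∃ a b, A = vecMulVec a b := by
  by_cases hA : A = 0
  · exact ⟨0, 0, by ext i j; simp [hA, vecMulVec_apply]⟩
  · have : ∃ i, A i ≠ 0 := by
      by_contra hc
      push_neg at hc
      exact hA (by ext i j; rw [hc i]; rfl)
    obtain ⟨i, hi⟩ := this
    have hle : span K ({A i} : Set (Fin n → K)) ≤ span K (Set.range fun i => A i) :=
      span_le.2 (by rintro _ rfl; exact subset_span ⟨i, rfl⟩)
    have heq : span K ({A i} : Set (Fin n → K)) = span K (Set.range fun i => A i) := by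
      apply Submodule.eq_of_le_of_finrank_le hle
      rw [finrank_span_singleton hi]
      exact h
    have hmem : ∀ k, A k ∈ span K ({A i} : Set (Fin n → K)) := by
      intro k; rw [heq]; exact subset_span ⟨k, rfl⟩
    choose c hc using fun k => mem_span_singleton.1 (hmem k)
    refine ⟨c, A i, ?_⟩
    ext k j
    rw [vecMulVec_apply, ← hc k]
    rfl

lemma two_le_rk {A : Matrix (Fin m) (Fin n) K} {r q : Fin n → K}
    (hr : r ∈ span K (Set.range fun i => A i)) (hq : q ∈ span K (Set.range fun i => A i))
    (hli : LinearIndependent K ![r, q]) : 2 ≤ rk A := by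
  have hle : span K (Set.range ![r, q]) ≤ span K (Set.range fun i => A i) := by
    rw [span_le]
    rintro _ ⟨k, rfl⟩
    fin_cases k <;> simpa
  have h2 : Module.finrank K (span K (Set.range ![r, q])) = 2 := by
    rw [finrank_span_eq_card hli]; simp
  calc 2 = Module.finrank K (span K (Set.range ![r, q])) := h2.symm
    _ ≤ rk A := Submodule.finrank_mono hle

lemma keyrk {p c : Fin m → K} {r q : Fin n → K}
    (hp : p ≠ 0) (hq : q ≠ 0)
    (hr : ∀ l : K, r ≠ l • q) (hc : ∀ u : K, c ≠ fun i => p i * u) :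
    2 ≤ rk (vecMulVec p r - vecMulVec c q) := by
  set W : Matrix (Fin m) (Fin n) K := vecMulVec p r - vecMulVec c q with hW
  have hrow : ∀ i, W i = p i • r - c i • q := by
    intro i; funext j
    simp [hW, vecMulVec_apply, Pi.smul_apply, smul_eq_mul, Matrix.sub_apply]
  have hrowmem : ∀ i, W i ∈ span K (Set.range fun i => W i) := fun i => subset_span ⟨i, rfl⟩
  obtain ⟨i0, hi0⟩ := Function.ne_iff.1 hp
  simp only [Pi.zero_apply] at hi0
  set μ : K := (p i0)⁻¹ * c i0 with hμ
  obtain ⟨i1, hi1⟩ := Function.ne_iff.1 (hc μ)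
  -- z := (p i1 * (p i0)⁻¹) • W i0 - W i1 = (c i1 - p i1 * μ) • q
  have hz : (c i1 - p i1 * μ) • q = (p i1 * (p i0)⁻¹) • W i0 - W i1 := by
    funext j
    simp only [Pi.smul_apply, Pi.sub_apply, hrow, smul_eq_mul]
    have h1 : p i1 * (p i0)⁻¹ * (p i0 * r j) = p i1 * r j := by
      rw [mul_assoc, ← mul_assoc (p i0)⁻¹, inv_mul_cancel₀ hi0, one_mul]
    have h2 : p i1 * (p i0)⁻¹ * (c i0 * q j) = p i1 * μ * q j := by
      simp [hμ, mul_assoc]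
    rw [mul_sub, h1, h2, sub_mul]
    abel
  have ht : c i1 - p i1 * μ ≠ 0 := sub_ne_zero.2 hi1
  have hzmem : (c i1 - p i1 * μ) • q ∈ span K (Set.range fun i => W i) := by
    rw [hz]
    exact sub_mem (smul_mem _ _ (hrowmem i0)) (hrowmem i1)
  have hqmem : q ∈ span K (Set.range fun i => W i) := by
    have := smul_mem _ (c i1 - p i1 * μ)⁻¹ hzmem
    rwa [smul_smul, inv_mul_cancel₀ ht, one_smul] at this
  have hrmem : r ∈ span K (Set.range fun i => W i) := by
    have h : r = (p i0)⁻¹ • (W i0 + c i0 • q) := by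
      rw [hrow i0, sub_add_cancel, smul_smul, inv_mul_cancel₀ hi0, one_smul]
    rw [h]
    exact smul_mem _ _ (add_mem (hrowmem i0) (smul_mem _ _ hqmem))
  have hq0 : q ≠ 0 := hq
  have hli : LinearIndependent K ![r, q] := by
    rw [LinearIndependent.pair_iff]
    intro s t hst
    by_cases hs : s = 0
    · subst hs
      rw [zero_smul, zero_add] at hst
      refine ⟨rfl, ?_⟩
      by_contra ht0
      apply hq0
      have := congrArg (fun v => t⁻¹ • v) hst
      simpa [smul_smul, inv_mul_cancel₀ ht0] using this
    · exfalso
      apply hr (s⁻¹ * -t)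
      have h1 : s • r = -(t • q) := by
        rw [← neg_eq_of_add_eq_zero_left hst]
      calc r = s⁻¹ • (s • r) := by rw [smul_smul, inv_mul_cancel₀ hs, one_smul]
        _ = s⁻¹ • (-(t • q)) := by rw [h1]
        _ = (s⁻¹ * -t) • q := by rw [smul_neg, smul_smul, ← neg_smul, ← mul_neg]
  exact two_le_rk hrmem hqmem hli




lemma typeone_diff (hm : 0 < m) {M : Set (Matrix (Fin m) (Fin n) K)} (hM : IsTypeOne M)
    {Z₀ : Matrix (Fin m) (Fin n) K} (hZ₀ : Z₀ ∈ M) :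
    ∃ p : Fin m → K, p ≠ 0 ∧ ∀ Z ∈ M, ∃ r : Fin n → K, Z - Z₀ = vecMulVec p r := by
  obtain ⟨P, A', hP, rfl⟩ := hM
  set z : Fin m := ⟨0, hm⟩ with hz
  refine ⟨fun i => P i z, ?_, ?_⟩
  · -- p ≠ 0 from IsUnit P
    intro h0
    obtain ⟨u, hu⟩ := hP
    have h1 : (u⁻¹ : (Matrix (Fin m) (Fin m) K)ˣ).val * P = 1 := by
      rw [← hu]; exact u.inv_mul
    have h2 := congrFun (congrFun h1 z) z
    rw [Matrix.mul_apply] at h2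
    have : ∀ k, (u⁻¹ : (Matrix (Fin m) (Fin m) K)ˣ).val z k * P k z = 0 := by
      intro k
      rw [congrFun h0 k]; simp only [Pi.zero_apply, mul_zero]
    rw [Finset.sum_congr rfl (fun k _ => this k)] at h2
    simp at h2
  · rintro Z ⟨X, hX, rfl⟩
    obtain ⟨X₀, hX₀, hZ₀eq⟩ := hZ₀
    refine ⟨(X - X₀) z, ?_⟩
    have hXm : X - X₀ ∈ M1set K m n := fun i j hij => by
      simp [Matrix.sub_apply, hX i j hij, hX₀ i j hij]
    have : (fun X => P * X + A') X - (fun X => P * X + A') X₀ = P * (X - X₀) := by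
      simp [Matrix.mul_sub]
    rw [← hZ₀eq, this]
    ext i j
    rw [Matrix.mul_apply, vecMulVec_apply]
    rw [Finset.sum_eq_single z]
    · intro k _ hk
      rw [hXm k j (by simpa [hz, Fin.ext_iff] using hk), mul_zero]
    · intro h; exact absurd (Finset.mem_univ z) h

lemma typetwo_diff (hn : 0 < n) {N : Set (Matrix (Fin m) (Fin n) K)} (hN : IsTypeTwo N)
    {Z₀ : Matrix (Fin m) (Fin n) K} (hZ₀ : Z₀ ∈ N) :
    ∃ q : Fin n → K, q ≠ 0 ∧ ∀ Z ∈ N, ∃ c : Fin m → K, Z - Z₀ = vecMulVec c q := by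
  obtain ⟨Q, A', hQ, rfl⟩ := hN
  set z : Fin n := ⟨0, hn⟩ with hz
  refine ⟨fun j => Q z j, ?_, ?_⟩
  · intro h0
    obtain ⟨u, hu⟩ := hQ
    have h1 : Q * (u⁻¹ : (Matrix (Fin n) (Fin n) K)ˣ).val = 1 := by
      rw [← hu]; exact u.mul_inv
    have h2 := congrFun (congrFun h1 z) z
    rw [Matrix.mul_apply] at h2
    have : ∀ k, Q z k * (u⁻¹ : (Matrix (Fin n) (Fin n) K)ˣ).val k z = 0 := by
      intro k
      rw [congrFun h0 k]; simp only [Pi.zero_apply, zero_mul]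
    rw [Finset.sum_congr rfl (fun k _ => this k)] at h2
    simp at h2
  · rintro Z ⟨X, hX, rfl⟩
    obtain ⟨X₀, hX₀, hZ₀eq⟩ := hZ₀
    refine ⟨fun i => (X - X₀) i z, ?_⟩
    have hXm : X - X₀ ∈ N1set K m n := fun i j hij => by
      simp [Matrix.sub_apply, hX i j hij, hX₀ i j hij]
    have : (fun X => X * Q + A') X - (fun X => X * Q + A') X₀ = (X - X₀) * Q := by
      simp [Matrix.sub_mul]
    rw [← hZ₀eq, this]
    ext i j
    rw [Matrix.mul_apply, vecMulVec_apply]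
    rw [Finset.sum_eq_single z]
    · intro k _ hk
      rw [hXm i k (by simpa [hz, Fin.ext_iff] using hk), zero_mul]
    · intro h; exact absurd (Finset.mem_univ z) h

end auxlemmas

-- small algebraic helpers
section aux2
variable {K : Type*} [DivisionRing K] {m n : ℕ}

lemma vmv_add_left (a c : Fin m → K) (b : Fin n → K) :
    vecMulVec a b + vecMulVec c b = vecMulVec (a + c) b := by
  ext i j; simp [vecMulVec_apply, add_mul]
lemma vmv_sub_left (a c : Fin m → K) (b : Fin n → K) :
    vecMulVec a b - vecMulVec c b = vecMulVec (a - c) b := by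
  ext i j; simp [vecMulVec_apply, sub_mul]
lemma vmv_add_right (a : Fin m → K) (b d : Fin n → K) :
    vecMulVec a b + vecMulVec a d = vecMulVec a (b + d) := by
  ext i j; simp [vecMulVec_apply, mul_add]
lemma vmv_sub_right (a : Fin m → K) (b d : Fin n → K) :
    vecMulVec a b - vecMulVec a d = vecMulVec a (b - d) := by
  ext i j; simp [vecMulVec_apply, mul_sub]
lemma vmv_zero_left (b : Fin n → K) : vecMulVec (0 : Fin m → K) b = 0 := by
  ext i j; simp [vecMulVec_apply]
lemma vmv_zero_right (a : Fin m → K) : vecMulVec a (0 : Fin n → K) = 0 := by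
  ext i j; simp [vecMulVec_apply]
end aux2

section main
variable {D D' : Type*} [DivisionRing D] [DivisionRing D'] {m n m' n' : ℕ}

lemma main_aux (hm' : 2 ≤ m') (hn' : 2 ≤ n')
    (φ : Matrix (Fin m) (Fin n) D → Matrix (Fin m') (Fin n') D')
    (hhom : IsGraphHom φ) (hadd : ∀ A B, φ (A + B) = φ A + φ B)
    (A : Matrix (Fin m) (Fin n) D) (M N : Set (Matrix (Fin m') (Fin n') D'))
    (hM : IsTypeOne M) (hN : IsTypeTwo N)
    (hball : φ '' uball A ⊆ M ∪ N) (hinter : φ A ∈ M ∩ N) :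
    IsColouring φ := by
  classical
  have h0 : φ 0 = 0 := by
    have h := hadd 0 0
    rw [add_zero] at h
    exact (add_eq_left.mp h.symm)
  have hsub : ∀ X Y, φ (X - Y) = φ X - φ Y := by
    intro X Y
    have h := hadd (X - Y) Y
    rw [sub_add_cancel] at h
    rw [h]
    abel
  obtain ⟨p, hp, hMp⟩ := typeone_diff (by omega) hM hinter.1
  obtain ⟨q, hq, hNq⟩ := typetwo_diff (by omega) hN hinter.2
  set U : Set (Matrix (Fin m') (Fin n') D') := {Z | ∃ r, Z = vecMulVec p r} with hUdef
  set V : Set (Matrix (Fin m') (Fin n') D') := {Z | ∃ c, Z = vecMulVec c q} with hVdef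
  have hU0 : (0 : Matrix (Fin m') (Fin n') D') ∈ U := ⟨0, (vmv_zero_right p).symm⟩
  have hV0 : (0 : Matrix (Fin m') (Fin n') D') ∈ V := ⟨0, (vmv_zero_left q).symm⟩
  have hUadd : ∀ x ∈ U, ∀ y ∈ U, x + y ∈ U := by
    rintro x ⟨r1, rfl⟩ y ⟨r2, rfl⟩
    exact ⟨r1 + r2, vmv_add_right p r1 r2⟩
  have hVadd : ∀ x ∈ V, ∀ y ∈ V, x + y ∈ V := by
    rintro x ⟨c1, rfl⟩ y ⟨c2, rfl⟩
    exact ⟨c1 + c2, vmv_add_left c1 c2 q⟩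
  have hUsub : ∀ x ∈ U, ∀ y ∈ U, x - y ∈ U := by
    rintro x ⟨r1, rfl⟩ y ⟨r2, rfl⟩
    exact ⟨r1 - r2, vmv_sub_right p r1 r2⟩
  have hVsub : ∀ x ∈ V, ∀ y ∈ V, x - y ∈ V := by
    rintro x ⟨c1, rfl⟩ y ⟨c2, rfl⟩
    exact ⟨c1 - c2, vmv_sub_left c1 c2 q⟩
  have hUrk : ∀ x ∈ U, x ≠ 0 → rk x = 1 := by
    rintro x ⟨r, rfl⟩ hne
    refine rk_vecMulVec hp ?_
    rintro rfl
    exact hne (vmv_zero_right p)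
  have hVrk : ∀ x ∈ V, x ≠ 0 → rk x = 1 := by
    rintro x ⟨c, rfl⟩ hne
    refine rk_vecMulVec ?_ hq
    rintro rfl
    exact hne (vmv_zero_left q)
  have hUV : ∀ R : Matrix (Fin m) (Fin n) D, rk R ≤ 1 → φ R ∈ U ∨ φ R ∈ V := by
    intro R hR
    have hmem : A + R ∈ uball A := by
      show rk (A + R - A) ≤ 1
      rwa [add_sub_cancel_left]
    have h := hball ⟨A + R, hmem, rfl⟩
    rw [hadd] at h
    rcases h with h | h
    · obtain ⟨r, hr⟩ := hMp _ h
      rw [add_sub_cancel_left] at hr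
      exact Or.inl ⟨r, hr⟩
    · obtain ⟨c, hc⟩ := hNq _ h
      rw [add_sub_cancel_left] at hc
      exact Or.inr ⟨c, hc⟩
  have hkey : ∀ x y : Matrix (Fin m') (Fin n') D',
      x ∈ U → x ∉ V → y ∈ V → y ∉ U → rk (x - y) ≠ 1 := by
    rintro x y ⟨r, rfl⟩ hxV ⟨c, rfl⟩ hyU
    have hr' : ∀ l : D', r ≠ l • q := by
      intro l hl
      exact hxV ⟨fun i => p i * l, by ext i j; simp [vecMulVec_apply, hl, mul_assoc]⟩
    have hc' : ∀ u : D', c ≠ fun i => p i * u := by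
      intro u hu
      exact hyU ⟨u • q, by ext i j; simp [vecMulVec_apply, hu, mul_assoc]⟩
    have := keyrk hp hq hr' hc'
    omega
  have final : ∀ W : Set (Matrix (Fin m') (Fin n') D'),
      (0 : Matrix (Fin m') (Fin n') D') ∈ W → (∀ x ∈ W, ∀ y ∈ W, x + y ∈ W) →
      (∀ x ∈ W, x ≠ 0 → rk x = 1) →
      (∀ R : Matrix (Fin m) (Fin n) D, rk R ≤ 1 → φ R ∈ W) → IsColouring φ := by
    intro W hW0 hWadd hWrk hWφ
    have hφsum : ∀ (s : Finset (Fin m)) (f : Fin m → Matrix (Fin m) (Fin n) D),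
        φ (∑ i ∈ s, f i) = ∑ i ∈ s, φ (f i) := by
      intro s f
      induction s using Finset.induction with
      | empty => simpa using h0
      | insert _ _ hx ih => rw [Finset.sum_insert hx, Finset.sum_insert hx, hadd, ih]
    have hall : ∀ X, φ X ∈ W := by
      intro X
      have hdecomp : X = ∑ i : Fin m, vecMulVec (Pi.single i (1 : D)) (X i) := by
        ext k j
        rw [Matrix.sum_apply]
        simp [vecMulVec_apply, Pi.single_apply]
      rw [hdecomp, hφsum]
      apply Finset.sum_induction _ (· ∈ W) (fun a b ha hb => hWadd a ha b hb) hW0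
      intro i _
      exact hWφ _ (rk_vecMulVec_le _ _)
    constructor
    · exact Set.range_nonempty φ
    · rintro _ ⟨X, rfl⟩ _ ⟨Y, rfl⟩ hne
      rw [← hsub]
      refine hWrk _ (hall _) ?_
      rw [hsub]
      exact sub_ne_zero.2 hne
  by_cases hex : ∀ R : Matrix (Fin m) (Fin n) D, rk R ≤ 1 → φ R ∈ V
  · exact final V hV0 hVadd hVrk hex
  push_neg at hex
  obtain ⟨R0, hR0rk, hR0V⟩ := hex
  have hR0U : φ R0 ∈ U := (hUV R0 hR0rk).resolve_right hR0V
  apply final U hU0 hUadd hUrk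
  intro S hSrk
  by_contra hSU
  have hSV : φ S ∈ V := (hUV S hSrk).resolve_left hSU
  have hR0ne : R0 ≠ 0 := by rintro rfl; exact hR0V (h0 ▸ hV0)
  have hSne : S ≠ 0 := by rintro rfl; exact hSU (h0 ▸ hU0)
  obtain ⟨a, b, hab⟩ := exists_of_rk_le_one hR0rk
  obtain ⟨c, d, hcd⟩ := exists_of_rk_le_one hSrk
  have ha : a ≠ 0 := by rintro rfl; exact hR0ne (hab.trans (vmv_zero_left b))
  have hb : b ≠ 0 := by rintro rfl; exact hR0ne (hab.trans (vmv_zero_right a))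
  have hc : c ≠ 0 := by rintro rfl; exact hSne (hcd.trans (vmv_zero_left d))
  have hd : d ≠ 0 := by rintro rfl; exact hSne (hcd.trans (vmv_zero_right c))
  have hRSfalse : rk (R0 - S) ≤ 1 → False := by
    intro h
    by_cases hEq : R0 = S
    · exact hR0V (hEq ▸ hSV)
    · have h1 : rk (R0 - S) = 1 := le_antisymm h (one_le_rk (sub_ne_zero.2 hEq))
      exact hkey _ _ hR0U hR0V hSV hSU (hhom R0 S h1)
  by_cases hbd : b = d
  · refine hRSfalse ?_
    rw [hab, hcd, ← hbd, vmv_sub_left]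
    exact rk_vecMulVec_le _ _
  by_cases hac : a = c
  · refine hRSfalse ?_
    rw [hab, hcd, ← hac, vmv_sub_right]
    exact rk_vecMulVec_le _ _
  by_cases hanc : a = -c
  · refine hRSfalse ?_
    have he : R0 - S = vecMulVec a (b + d) := by
      rw [hab, hcd, hanc]
      ext i j
      simp [vecMulVec_apply, mul_add, Matrix.sub_apply]
      abel
    rw [he]
    exact rk_vecMulVec_le _ _
  have hbd' : b - d ≠ 0 := sub_ne_zero.2 hbd
  have hdb' : d - b ≠ 0 := sub_ne_zero.2 (Ne.symm hbd)
  have hac' : a - c ≠ 0 := sub_ne_zero.2 hac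
  have hca' : c - a ≠ 0 := sub_ne_zero.2 (Ne.symm hac)
  have hapc : a + c ≠ 0 := fun h => hanc (eq_neg_of_add_eq_zero_left h)
  -- T = a⊗d
  have hTU : φ (vecMulVec a d) ∈ U := by
    rcases hUV _ (rk_vecMulVec_le a d) with h | h
    · exact h
    · by_contra hnTU
      have h1 : rk (R0 - vecMulVec a d) = 1 := by
        rw [hab, vmv_sub_right]
        exact rk_vecMulVec ha hbd'
      exact hkey _ _ hR0U hR0V h hnTU (hhom _ _ h1)
  have hTV : φ (vecMulVec a d) ∈ V := by
    rcases hUV _ (rk_vecMulVec_le a d) with h | h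
    · by_contra hnTV
      have h1 : rk (vecMulVec a d - S) = 1 := by
        rw [hcd, vmv_sub_left]
        exact rk_vecMulVec hac' hd
      exact hkey _ _ h hnTV hSV hSU (hhom _ _ h1)
    · exact h
  -- T' = c⊗b
  have hT'U : φ (vecMulVec c b) ∈ U := by
    rcases hUV _ (rk_vecMulVec_le c b) with h | h
    · exact h
    · by_contra hnTU
      have h1 : rk (R0 - vecMulVec c b) = 1 := by
        rw [hab, vmv_sub_left]
        exact rk_vecMulVec hac' hb
      exact hkey _ _ hR0U hR0V h hnTU (hhom _ _ h1)
  have hT'V : φ (vecMulVec c b) ∈ V := by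
    rcases hUV _ (rk_vecMulVec_le c b) with h | h
    · by_contra hnTV
      have h1 : rk (vecMulVec c b - S) = 1 := by
        rw [hcd, vmv_sub_right]
        exact rk_vecMulVec hc hbd'
      exact hkey _ _ h hnTV hSV hSU (hhom _ _ h1)
    · exact h
  -- Z = R0 + T', W = S + T
  have hZU : φ (R0 + vecMulVec c b) ∈ U := by
    rw [hadd]; exact hUadd _ hR0U _ hT'U
  have hZV : φ (R0 + vecMulVec c b) ∉ V := by
    intro hv
    apply hR0V
    have he : φ R0 = φ (R0 + vecMulVec c b) - φ (vecMulVec c b) := by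
      rw [hadd]; abel
    rw [he]
    exact hVsub _ hv _ hT'V
  have hWV : φ (S + vecMulVec a d) ∈ V := by
    rw [hadd]; exact hVadd _ hSV _ hTV
  have hWU : φ (S + vecMulVec a d) ∉ U := by
    intro hu
    apply hSU
    have he : φ S = φ (S + vecMulVec a d) - φ (vecMulVec a d) := by
      rw [hadd]; abel
    rw [he]
    exact hUsub _ hu _ hTU
  have h1 : rk ((R0 + vecMulVec c b) - (S + vecMulVec a d)) = 1 := by
    have he : (R0 + vecMulVec c b) - (S + vecMulVec a d) = vecMulVec (a + c) (b - d) := by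
      rw [hab, hcd]
      ext i j
      simp [vecMulVec_apply, Matrix.sub_apply, Matrix.add_apply, add_mul, mul_sub]
      abel
    rw [he]
    exact rk_vecMulVec hapc hbd'
  exact hkey _ _ hZU hZV hWV hWU (hhom _ _ h1)

end main

/-- a degenerate additive graph homomorphism is a (vertex) colouring. -/
theorem stmt1 {D D' : Type*} [DivisionRing D] [DivisionRing D'] {m n m' n' : ℕ}
    (hm : 2 ≤ m) (hn : 2 ≤ n) (hm' : 2 ≤ m') (hn' : 2 ≤ n')
    (φ : Matrix (Fin m) (Fin n) D → Matrix (Fin m') (Fin n') D')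
    (hhom : IsGraphHom φ) (hadd : ∀ A B, φ (A + B) = φ A + φ B)
    (hdeg : Degenerate φ) :
    IsColouring φ := by
  obtain ⟨A, M, N, hA, hMN, hball, hinter⟩ := hdeg
  rcases hMN with ⟨h1, h2⟩ | ⟨h1, h2⟩
  · exact main_aux hm' hn' φ hhom hadd A M N h1 h2 hball hinter
  · refine main_aux hm' hn' φ hhom hadd A N M h2 h1 ?_ ⟨hinter.2, hinter.1⟩
    rwa [Set.union_comm]
end

section
/- Let D be a division ring, let m, n ≥ 2 be integers, let M be a maximal set in D^{m×n}, and let A ∈ D^{m×n}. Then A ∈ M if and only if there exist three noncollinear points B₁, B₂, B₃ of M (noncollinear in the affine geometry AG(M)) such that A is adjacent to each of B₁, B₂, B₃. -/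
open Matrix Function

/-!
Every maximal set is `{p yᵀ + C | y}` (type one) or `{x qᵀ + C | x}` (type two) with `p, q ≠ 0`.
Both this classification and the theorem rest on one rank fact: if `Z` and `Z - p yᵀ` have rank at
most one, with `p, y ≠ 0`, then `Z = p y'ᵀ` or `Z = x yᵀ`.

If `A` lies in a type-one set `M`, then `A + p e₀ᵀ`, `A + p e₁ᵀ`, `A + p (e₀ + e₁)ᵀ` are adjacent to
`A`, and no type-two set contains all three, since `e₀` and `e₁` are not both left multiples of one
vector. Conversely, if `A ∉ M` is adjacent to `B₁ ∈ M`, write `A - B₁ = a bᵀ`; then `a` is not a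
right multiple of `p`, and the rank fact puts every point of `M` adjacent to `A` into the type-two
set `{x bᵀ + B₁}`, hence onto a single line. Type two is symmetric.
-/

section Rank
variable {D : Type*} [DivisionRing D] {m n : ℕ}

lemma rk_eq_zero_iff {Z : Matrix (Fin m) (Fin n) D} : rk Z = 0 ↔ Z = 0 := by
  rw [rk, Submodule.finrank_eq_zero, Submodule.span_eq_bot, Set.forall_mem_range]
  exact ⟨funext, fun h i => congrFun h i⟩

lemma rk_le_one_iff {Z : Matrix (Fin m) (Fin n) D} :
    rk Z ≤ 1 ↔ ∃ p y, Z = vecMulVec p y := by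
  constructor
  · intro h
    obtain ⟨v, hv⟩ := finrank_le_one_iff.1 h
    choose c hc using fun i => hv ⟨Z i, Submodule.subset_span ⟨i, rfl⟩⟩
    refine ⟨c, v, funext fun i => funext fun j => ?_⟩
    simpa [vecMulVec_apply] using congrFun (congrArg Subtype.val (hc i)).symm j
  · rintro ⟨p, y, rfl⟩
    have hle : Submodule.span D (Set.range fun i => vecMulVec p y i) ≤ D ∙ y :=
      Submodule.span_le.2 <| Set.range_subset_iff.2 fun i =>
        Submodule.mem_span_singleton.2 ⟨p i, funext fun j => by simp [vecMulVec_apply]⟩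
    exact (Submodule.finrank_mono hle).trans ((finrank_span_le_card {y}).trans (by simp))

lemma vecMulVec_ne_zero_iff {α ι κ : Type*} [MulZeroClass α] [NoZeroDivisors α] {p : ι → α}
    {y : κ → α} : vecMulVec p y ≠ 0 ↔ p ≠ 0 ∧ y ≠ 0 := by
  constructor
  · intro h
    refine ⟨fun hp => h ?_, fun hy => h ?_⟩
    · ext; simp [vecMulVec_apply, hp]
    · ext; simp [vecMulVec_apply, hy]
  · rintro ⟨hp, hy⟩ h
    obtain ⟨i, hi⟩ := Function.ne_iff.1 hp
    obtain ⟨j, hj⟩ := Function.ne_iff.1 hy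
    exact mul_ne_zero hi hj (by simpa [vecMulVec_apply] using congrFun (congrFun h i) j)

lemma rk_eq_one_iff {Z : Matrix (Fin m) (Fin n) D} :
    rk Z = 1 ↔ ∃ p y, p ≠ 0 ∧ y ≠ 0 ∧ Z = vecMulVec p y := by
  constructor
  · intro h
    obtain ⟨p, y, rfl⟩ := rk_le_one_iff.1 h.le
    have hZ : vecMulVec p y ≠ 0 := fun h0 => by simp [h0, rk_eq_zero_iff.2] at h
    exact ⟨p, y, (vecMulVec_ne_zero_iff.1 hZ).1, (vecMulVec_ne_zero_iff.1 hZ).2, rfl⟩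
  · rintro ⟨p, y, hp, hy, rfl⟩
    have h0 : rk (vecMulVec p y) ≠ 0 := rk_eq_zero_iff.not.2 (vecMulVec_ne_zero_iff.2 ⟨hp, hy⟩)
    have h1 : rk (vecMulVec p y) ≤ 1 := rk_le_one_iff.2 ⟨p, y, rfl⟩
    omega

end Rank

section Units
variable {D : Type*} [DivisionRing D] {m : ℕ}

-- `1 + u eₖᵀ` has `k`-th column `p` and inverse `1 + w eₖᵀ`; the swap moves column `k` to `j`.
lemma exists_isUnit_col_eq {p : Fin m → D} (hp : p ≠ 0) (j : Fin m) :
    ∃ P : Matrix (Fin m) (Fin m) D, IsUnit P ∧ P.col j = p := by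
  obtain ⟨k, hk⟩ := Function.ne_iff.1 hp
  set u := p - Pi.single k 1
  set w := -(MulOpposite.op (p k)⁻¹ • u)
  have hkk : (p k - 1) * (p k)⁻¹ = 1 - (p k)⁻¹ := by rw [sub_mul, mul_inv_cancel₀ hk, one_mul]
  have hE : IsUnit (1 + vecMulVec u (Pi.single k 1)) := by
    refine IsUnit.of_mul_eq_one (1 + vecMulVec w (Pi.single k 1)) ?_
    rw [mul_add, add_mul, add_mul, one_mul, one_mul, mul_one, vecMulVec_mul_vecMulVec,
      single_dotProduct, one_mul, add_assoc, add_eq_left]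
    ext i l
    simp [vecMulVec_apply, w, u]
    rw [hkk]
    noncomm_ring
  refine ⟨_ * swap D j k, hE.mul (IsUnit.of_mul_eq_one _ (swap_mul_self j k)), ?_⟩
  ext i
  by_cases hi : i = k <;> simp [u, vecMulVec_apply, one_apply, hi]

lemma exists_isUnit_row_eq {q : Fin m → D} (hq : q ≠ 0) (j : Fin m) :
    ∃ Q : Matrix (Fin m) (Fin m) D, IsUnit Q ∧ Q.row j = q := by
  obtain ⟨k, hk⟩ := Function.ne_iff.1 hq
  set u := q - Pi.single k 1
  set w := -((q k)⁻¹ • u)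
  have hkk : (q k - 1) * (q k)⁻¹ = 1 - (q k)⁻¹ := by rw [sub_mul, mul_inv_cancel₀ hk, one_mul]
  have hE : IsUnit (1 + vecMulVec (Pi.single k 1) u) := by
    refine IsUnit.of_mul_eq_one (1 + vecMulVec (Pi.single k 1) w) ?_
    rw [mul_add, add_mul, add_mul, one_mul, one_mul, mul_one, vecMulVec_mul_vecMulVec,
      dotProduct_single, mul_one, add_assoc, add_eq_left]
    ext i l
    simp [vecMulVec_apply, w, u]
    rw [← mul_assoc (q k - 1), hkk]
    noncomm_ring
  refine ⟨swap D j k * _, (IsUnit.of_mul_eq_one _ (swap_mul_self j k)).mul hE, ?_⟩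
  ext i
  by_cases hi : k = i <;> simp [u, vecMulVec_apply, one_apply, hi]

lemma col_ne_zero_of_isUnit {P : Matrix (Fin m) (Fin m) D} (hP : IsUnit P) (j : Fin m) :
    P.col j ≠ 0 := by
  intro h
  obtain ⟨Q, hQ⟩ := hP.exists_left_inv
  have : Q *ᵥ (P *ᵥ Pi.single j 1) = Pi.single j 1 := by rw [mulVec_mulVec, hQ, one_mulVec]
  rw [mulVec_single_one, h, mulVec_zero] at this
  simpa using congrFun this j

lemma row_ne_zero_of_isUnit {P : Matrix (Fin m) (Fin m) D} (hP : IsUnit P) (i : Fin m) :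
    P.row i ≠ 0 := by
  intro h
  obtain ⟨Q, hQ⟩ := hP.exists_right_inv
  have : Pi.single i 1 ᵥ* P ᵥ* Q = Pi.single i 1 := by rw [vecMul_vecMul, hQ, vecMul_one]
  rw [single_one_vecMul, h, zero_vecMul] at this
  simpa using congrFun this i

end Units

section Multiples
variable {D : Type*} [DivisionRing D] {m n : ℕ}

def colMultiples (p : Fin m → D) : AddSubgroup (Matrix (Fin m) (Fin n) D) :=
  (AddMonoidHom.mk' (vecMulVec p) (vecMulVec_add p)).range

def rowMultiples (q : Fin n → D) : AddSubgroup (Matrix (Fin m) (Fin n) D) :=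
  (AddMonoidHom.mk' (fun x => vecMulVec x q) fun x x' => add_vecMulVec x x' q).range

lemma mem_colMultiples {p : Fin m → D} {Z : Matrix (Fin m) (Fin n) D} :
    Z ∈ colMultiples p ↔ ∃ y, vecMulVec p y = Z :=
  AddMonoidHom.mem_range

lemma mem_rowMultiples {q : Fin n → D} {Z : Matrix (Fin m) (Fin n) D} :
    Z ∈ rowMultiples q ↔ ∃ x, vecMulVec x q = Z :=
  AddMonoidHom.mem_range

lemma exists_eq_op_smul_of_vecMulVec_eq {x x' : Fin m → D} {y y' : Fin n → D}
    (h : vecMulVec x y = vecMulVec x' y') (hy : y ≠ 0) : ∃ c : D, x = MulOpposite.op c • x' := by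
  obtain ⟨j, hj⟩ : ∃ j, y j ≠ 0 := Function.ne_iff.1 hy
  refine ⟨y' j * (y j)⁻¹, funext fun i => ?_⟩
  have hij : x i * y j = x' i * y' j := by simpa [vecMulVec_apply] using congrFun (congrFun h i) j
  simp [← mul_assoc, ← hij, mul_inv_cancel_right₀ hj]

lemma exists_eq_smul_of_vecMulVec_eq {x x' : Fin m → D} {y y' : Fin n → D}
    (h : vecMulVec x y = vecMulVec x' y') (hx : x ≠ 0) : ∃ c : D, y = c • y' := by
  obtain ⟨i, hi⟩ : ∃ i, x i ≠ 0 := Function.ne_iff.1 hx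
  refine ⟨(x i)⁻¹ * x' i, funext fun j => ?_⟩
  have hij : x i * y j = x' i * y' j := by simpa [vecMulVec_apply] using congrFun (congrFun h i) j
  simp [mul_assoc, ← hij, inv_mul_cancel_left₀ hi]

lemma mem_colMultiples_or_mem_rowMultiples {p : Fin m → D} {y : Fin n → D} (hp : p ≠ 0)
    (hy : y ≠ 0) {Z : Matrix (Fin m) (Fin n) D} (hZ : rk Z ≤ 1)
    (h : rk (Z - vecMulVec p y) ≤ 1) : Z ∈ colMultiples p ∨ Z ∈ rowMultiples y := by
  obtain ⟨p', y', rfl⟩ := rk_le_one_iff.1 hZ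
  by_cases hcol : ∃ c : D, p' = MulOpposite.op c • p
  · obtain ⟨c, rfl⟩ := hcol
    exact Or.inl (mem_colMultiples.2 ⟨c • y', vecMulVec_smul' p c y'⟩)
  push Not at hcol
  obtain ⟨i₀, hi₀⟩ : ∃ i, p i ≠ 0 := Function.ne_iff.1 hp
  obtain ⟨i₁, hi₁⟩ := Function.ne_iff.1 (hcol ((p i₀)⁻¹ * p' i₀))
  set W := Submodule.span D (Set.range fun i => (vecMulVec p' y' - vecMulVec p y) i)
  have hrow : ∀ i, p' i • y' - p i • y ∈ W := fun i =>
    Submodule.subset_span ⟨i, funext fun j => by simp [vecMulVec_apply]⟩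
  -- eliminating `y` between rows `i₁` and `i₀` leaves a nonzero multiple of `y'`
  have hy'W : y' ∈ W := by
    have hγ : p' i₁ - p i₁ * ((p i₀)⁻¹ * p' i₀) ≠ 0 := sub_ne_zero.2 (by simpa using hi₁)
    have := W.sub_mem (hrow i₁) (W.smul_mem (p i₁ * (p i₀)⁻¹) (hrow i₀))
    rwa [show p' i₁ • y' - p i₁ • y - (p i₁ * (p i₀)⁻¹) • (p' i₀ • y' - p i₀ • y)
        = (p' i₁ - p i₁ * ((p i₀)⁻¹ * p' i₀)) • y' by
      simp only [smul_sub, smul_smul, sub_smul, mul_assoc, inv_mul_cancel₀ hi₀, mul_one]; abel,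
      W.smul_mem_iff hγ] at this
  have hyW : y ∈ W := by
    have := W.sub_mem (W.smul_mem (p' i₀) hy'W) (hrow i₀)
    rwa [sub_sub_cancel, W.smul_mem_iff hi₀] at this
  have hW : D ∙ y = W := Submodule.eq_of_le_of_finrank_le
    ((Submodule.span_singleton_le_iff_mem _ _).2 hyW) (h.trans (finrank_span_singleton hy).ge)
  obtain ⟨c, rfl⟩ := Submodule.mem_span_singleton.1 (hW ▸ hy'W)
  exact Or.inr (mem_rowMultiples.2 ⟨MulOpposite.op c • p', (vecMulVec_smul' p' c y).symm⟩)

end Multiples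

section MaximalSets
variable {D : Type*} [DivisionRing D] {m n : ℕ}

def typeOneSet (p : Fin m → D) (C : Matrix (Fin m) (Fin n) D) : Set (Matrix (Fin m) (Fin n) D) :=
  {B | B - C ∈ colMultiples p}

def typeTwoSet (q : Fin n → D) (C : Matrix (Fin m) (Fin n) D) : Set (Matrix (Fin m) (Fin n) D) :=
  {B | B - C ∈ rowMultiples q}

lemma IsAdjSet.rk_sub_le_one {S : Set (Matrix (Fin m) (Fin n) D)} (hS : IsAdjSet S)
    {A B : Matrix (Fin m) (Fin n) D} (hA : A ∈ S) (hB : B ∈ S) : rk (A - B) ≤ 1 := by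
  by_cases h : A = B
  · simp [h, rk_eq_zero_iff.2]
  · exact (hS.2 A hA B hB h).le

lemma isAdjSet_typeOneSet {p : Fin m → D} (hp : p ≠ 0) (C : Matrix (Fin m) (Fin n) D) :
    IsAdjSet (typeOneSet p C) := by
  refine ⟨⟨C, by simp [typeOneSet]⟩, fun A hA B hB hAB => ?_⟩
  obtain ⟨y, hy⟩ := mem_colMultiples.1 (sub_mem hA hB)
  rw [sub_sub_sub_cancel_right] at hy
  have hy0 := (vecMulVec_ne_zero_iff.1 (hy ▸ sub_ne_zero.2 hAB)).2
  exact rk_eq_one_iff.2 ⟨p, y, hp, hy0, hy.symm⟩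

lemma isAdjSet_typeTwoSet {q : Fin n → D} (hq : q ≠ 0) (C : Matrix (Fin m) (Fin n) D) :
    IsAdjSet (typeTwoSet q C) := by
  refine ⟨⟨C, by simp [typeTwoSet]⟩, fun A hA B hB hAB => ?_⟩
  obtain ⟨x, hx⟩ := mem_rowMultiples.1 (sub_mem hA hB)
  rw [sub_sub_sub_cancel_right] at hx
  have hx0 := (vecMulVec_ne_zero_iff.1 (hx ▸ sub_ne_zero.2 hAB)).1
  exact rk_eq_one_iff.2 ⟨x, q, hx0, hq, hx.symm⟩

lemma IsAdjSet.sub_mem_colMultiples_or_rowMultiples {S : Set (Matrix (Fin m) (Fin n) D)}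
    (hS : IsAdjSet S) {A₀ A₁ B : Matrix (Fin m) (Fin n) D} (hA₀ : A₀ ∈ S) (hA₁ : A₁ ∈ S)
    (hB : B ∈ S) {p : Fin m → D} {y : Fin n → D} (hp : p ≠ 0) (hy : y ≠ 0)
    (h : vecMulVec p y = A₁ - A₀) : B - A₀ ∈ colMultiples p ∨ B - A₀ ∈ rowMultiples y :=
  mem_colMultiples_or_mem_rowMultiples hp hy (hS.rk_sub_le_one hB hA₀)
    (by rw [h, sub_sub_sub_cancel_right]; exact hS.rk_sub_le_one hB hA₁)

lemma IsAdjSet.subset_typeOneSet_or_subset_typeTwoSet [NeZero m]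
    {S : Set (Matrix (Fin m) (Fin n) D)} (hS : IsAdjSet S) :
    (∃ p C, p ≠ 0 ∧ S ⊆ typeOneSet p C) ∨ ∃ q C, q ≠ 0 ∧ S ⊆ typeTwoSet q C := by
  obtain ⟨A₀, hA₀⟩ := hS.1
  by_cases hsingle : ∀ B ∈ S, B = A₀
  · refine Or.inl ⟨Pi.single 0 1, A₀, by simp, fun B hB => ?_⟩
    simp [typeOneSet, hsingle B hB]
  push Not at hsingle
  obtain ⟨B₀, hB₀, hB₀A₀⟩ := hsingle
  obtain ⟨p₀, y₀, hp₀, hy₀, h₀⟩ := rk_eq_one_iff.1 (hS.2 B₀ hB₀ A₀ hA₀ hB₀A₀)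
  by_cases hone : ∀ B ∈ S, B - A₀ ∈ colMultiples p₀
  · exact Or.inl ⟨p₀, A₀, hp₀, hone⟩
  push Not at hone
  obtain ⟨B₁, hB₁, hB₁p₀⟩ := hone
  obtain ⟨x₁, hx₁⟩ := mem_rowMultiples.1
    ((hS.sub_mem_colMultiples_or_rowMultiples hA₀ hB₀ hB₁ hp₀ hy₀ h₀.symm).resolve_left hB₁p₀)
  have hx₁0 : x₁ ≠ 0 := by
    rintro rfl
    exact hB₁p₀ (by simp [← hx₁])
  refine Or.inr ⟨y₀, A₀, hy₀, fun B hB => ?_⟩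
  refine (hS.sub_mem_colMultiples_or_rowMultiples hA₀ hB₀ hB hp₀ hy₀ h₀.symm).elim
    (fun hp₀B => ?_) id
  refine (hS.sub_mem_colMultiples_or_rowMultiples hA₀ hB₁ hB hx₁0 hy₀ hx₁).elim
    (fun hx₁B => ?_) id
  by_cases hBA₀ : B - A₀ = 0
  · show B - A₀ ∈ rowMultiples y₀
    rw [hBA₀]
    exact zero_mem _
  -- `x₁` would be a right multiple of `p₀`, putting `B₁ - A₀` into `colMultiples p₀`
  obtain ⟨w, hw⟩ := mem_colMultiples.1 hx₁B
  obtain ⟨w', hw'⟩ := mem_colMultiples.1 hp₀B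
  obtain ⟨c, hc⟩ := exists_eq_op_smul_of_vecMulVec_eq (hw.trans hw'.symm)
    (vecMulVec_ne_zero_iff.1 (hw ▸ hBA₀)).2
  exact absurd (mem_colMultiples.2 ⟨c • y₀, by rw [vecMulVec_smul', ← hc, hx₁]⟩) hB₁p₀

lemma IsMaxSet.eq_typeOneSet_or_eq_typeTwoSet [NeZero m] {M : Set (Matrix (Fin m) (Fin n) D)}
    (hM : IsMaxSet M) :
    (∃ p C, p ≠ 0 ∧ M = typeOneSet p C) ∨ ∃ q C, q ≠ 0 ∧ M = typeTwoSet q C := by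
  rcases hM.1.subset_typeOneSet_or_subset_typeTwoSet with ⟨p, C, hp, hsub⟩ | ⟨q, C, hq, hsub⟩
  · exact Or.inl ⟨p, C, hp, (hM.2 _ (isAdjSet_typeOneSet hp C) hsub).symm⟩
  · exact Or.inr ⟨q, C, hq, (hM.2 _ (isAdjSet_typeTwoSet hq C) hsub).symm⟩

lemma M1set_eq_range [NeZero m] : M1set D m n = Set.range (vecMulVec (Pi.single 0 1)) := by
  ext X
  refine ⟨fun hX => ⟨X 0, ?_⟩, ?_⟩
  · ext i j
    by_cases hi : i = 0
    · simp [hi, vecMulVec_apply]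
    · simp [vecMulVec_apply, hi, hX i j (Fin.val_ne_zero_iff.2 hi)]
  · rintro ⟨y, rfl⟩ i j hi
    simp [vecMulVec_apply, Fin.val_ne_zero_iff.1 hi]

lemma N1set_eq_range [NeZero n] :
    N1set D m n = Set.range fun x => vecMulVec x (Pi.single 0 1) := by
  ext X
  refine ⟨fun hX => ⟨fun i => X i 0, ?_⟩, ?_⟩
  · ext i j
    by_cases hj : j = 0
    · simp [hj, vecMulVec_apply]
    · simp [vecMulVec_apply, hj, hX i j (Fin.val_ne_zero_iff.2 hj)]
  · rintro ⟨x, rfl⟩ i j hj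
    simp [vecMulVec_apply, Fin.val_ne_zero_iff.1 hj]

lemma image_M1set [NeZero m] (P : Matrix (Fin m) (Fin m) D) (C : Matrix (Fin m) (Fin n) D) :
    (fun X => P * X + C) '' M1set D m n = typeOneSet (P.col 0) C := by
  ext B
  simp [M1set_eq_range, typeOneSet, mem_colMultiples, mul_vecMulVec, eq_sub_iff_add_eq]

lemma image_N1set [NeZero n] (Q : Matrix (Fin n) (Fin n) D) (C : Matrix (Fin m) (Fin n) D) :
    (fun X => X * Q + C) '' N1set D m n = typeTwoSet (Q.row 0) C := by
  ext B
  simp [N1set_eq_range, typeTwoSet, mem_rowMultiples, vecMulVec_mul, eq_sub_iff_add_eq]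

lemma isTypeOne_iff [NeZero m] {S : Set (Matrix (Fin m) (Fin n) D)} :
    IsTypeOne S ↔ ∃ p C, p ≠ 0 ∧ S = typeOneSet p C := by
  constructor
  · rintro ⟨P, C, hP, rfl⟩
    exact ⟨P.col 0, C, col_ne_zero_of_isUnit hP 0, image_M1set P C⟩
  · rintro ⟨p, C, hp, rfl⟩
    obtain ⟨P, hP, hcol⟩ := exists_isUnit_col_eq hp 0
    exact ⟨P, C, hP, by rw [image_M1set, hcol]⟩

lemma isTypeTwo_iff [NeZero n] {S : Set (Matrix (Fin m) (Fin n) D)} :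
    IsTypeTwo S ↔ ∃ q C, q ≠ 0 ∧ S = typeTwoSet q C := by
  constructor
  · rintro ⟨Q, C, hQ, rfl⟩
    exact ⟨Q.row 0, C, row_ne_zero_of_isUnit hQ 0, image_N1set Q C⟩
  · rintro ⟨q, C, hq, rfl⟩
    obtain ⟨Q, hQ, hrow⟩ := exists_isUnit_row_eq hq 0
    exact ⟨Q, C, hQ, by rw [image_N1set, hrow]⟩

end MaximalSets

section Collinearity
variable {D : Type*} [DivisionRing D] {m n : ℕ}

def IsAdjToNoncollinear (M : Set (Matrix (Fin m) (Fin n) D)) (A : Matrix (Fin m) (Fin n) D) :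
    Prop :=
  ∃ B₁ B₂ B₃ : Matrix (Fin m) (Fin n) D,
    B₁ ∈ M ∧ B₂ ∈ M ∧ B₃ ∈ M ∧
    (¬ ∃ ℓ, IsLine M ℓ ∧ B₁ ∈ ℓ ∧ B₂ ∈ ℓ ∧ B₃ ∈ ℓ) ∧
    rk (A - B₁) = 1 ∧ rk (A - B₂) = 1 ∧ rk (A - B₃) = 1

lemma IsLine.exists_isTypeOne_superset {M ℓ : Set (Matrix (Fin m) (Fin n) D)} (h : IsLine M ℓ) :
    ∃ S, IsTypeOne S ∧ ℓ ⊆ S := by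
  obtain ⟨N, hMN | hMN, -, rfl⟩ := h
  · exact ⟨M, hMN.1, Set.inter_subset_left⟩
  · exact ⟨N, hMN.2, Set.inter_subset_right⟩

lemma IsLine.exists_isTypeTwo_superset {M ℓ : Set (Matrix (Fin m) (Fin n) D)} (h : IsLine M ℓ) :
    ∃ S, IsTypeTwo S ∧ ℓ ⊆ S := by
  obtain ⟨N, hMN | hMN, -, rfl⟩ := h
  · exact ⟨N, hMN.2, Set.inter_subset_right⟩
  · exact ⟨M, hMN.1, Set.inter_subset_left⟩

lemma single_ne_smul_of_single_eq_smul {S R ι : Type*} [DivisionRing S] [Semiring R]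
    [Nontrivial R] [Module S R] [DecidableEq ι] {i j : ι}
    (hij : i ≠ j) {q : ι → R} {c : S} (h : Pi.single i 1 = c • q) (c' : S) :
    Pi.single j 1 ≠ c' • q := by
  intro h'
  have hci : c • q i = 1 := by simpa using (congrFun h i).symm
  have hcj : c • q j = 0 := by simpa [hij.symm] using (congrFun h j).symm
  have hc : c ≠ 0 := by
    rintro rfl
    simp at hci
  have hqj : q j = 0 := by simpa [smul_smul, inv_mul_cancel₀ hc] using congrArg (c⁻¹ • ·) hcj
  simpa [hqj] using congrFun h' j

lemma isAdjToNoncollinear_of_mem_typeOneSet (hn : 2 ≤ n) {p : Fin m → D} (hp : p ≠ 0)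
    {C A : Matrix (Fin m) (Fin n) D} (hA : A ∈ typeOneSet p C) :
    IsAdjToNoncollinear (typeOneSet p C) A := by
  have : NeZero n := ⟨by omega⟩
  set e₀ : Fin n → D := Pi.single ⟨0, by omega⟩ 1
  set e₁ : Fin n → D := Pi.single ⟨1, by omega⟩ 1
  have hmem : ∀ y, A + vecMulVec p y ∈ typeOneSet p C := fun y => by
    simpa [typeOneSet, add_sub_right_comm] using add_mem hA (mem_colMultiples.2 ⟨y, rfl⟩)
  have hadj : ∀ y ≠ 0, rk (A - (A + vecMulVec p y)) = 1 := fun y hy => by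
    rw [sub_add_cancel_left, ← vecMulVec_neg]
    exact rk_eq_one_iff.2 ⟨p, -y, hp, neg_ne_zero.2 hy, rfl⟩
  have he₀ : e₀ ≠ 0 := by simp [e₀]
  have he₁ : e₁ ≠ 0 := by simp [e₁]
  have he₀₁ : e₀ + e₁ ≠ 0 := fun h => by simpa [e₀, e₁] using congrFun h ⟨0, by omega⟩
  refine ⟨_, _, _, hmem e₀, hmem e₁, hmem (e₀ + e₁), ?_, hadj _ he₀, hadj _ he₁, hadj _ he₀₁⟩
  rintro ⟨ℓ, hℓ, h₀, h₁, h₀₁⟩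
  obtain ⟨S, hS, hℓS⟩ := hℓ.exists_isTypeTwo_superset
  obtain ⟨q, C', -, rfl⟩ := isTypeTwo_iff.1 hS
  have hdiff : ∀ {y y'}, A + vecMulVec p y ∈ typeTwoSet q C' →
      A + vecMulVec p y' ∈ typeTwoSet q C' → ∃ c : D, y - y' = c • q := fun hy hy' => by
    obtain ⟨x, hx⟩ := mem_rowMultiples.1 (sub_mem hy hy')
    rw [sub_sub_sub_cancel_right, add_sub_add_left_eq_sub, ← vecMulVec_sub] at hx
    exact exists_eq_smul_of_vecMulVec_eq hx.symm hp
  obtain ⟨c, hc⟩ := hdiff (hℓS h₀₁) (hℓS h₁)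
  obtain ⟨c', hc'⟩ := hdiff (hℓS h₀₁) (hℓS h₀)
  rw [add_sub_cancel_right] at hc
  rw [add_sub_cancel_left] at hc'
  exact single_ne_smul_of_single_eq_smul (by simp [Fin.ext_iff]) hc c' hc'

lemma isAdjToNoncollinear_of_mem_typeTwoSet (hm : 2 ≤ m) {q : Fin n → D} (hq : q ≠ 0)
    {C A : Matrix (Fin m) (Fin n) D} (hA : A ∈ typeTwoSet q C) :
    IsAdjToNoncollinear (typeTwoSet q C) A := by
  have : NeZero m := ⟨by omega⟩
  set e₀ : Fin m → D := Pi.single ⟨0, by omega⟩ 1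
  set e₁ : Fin m → D := Pi.single ⟨1, by omega⟩ 1
  have hmem : ∀ x, A + vecMulVec x q ∈ typeTwoSet q C := fun x => by
    simpa [typeTwoSet, add_sub_right_comm] using add_mem hA (mem_rowMultiples.2 ⟨x, rfl⟩)
  have hadj : ∀ x ≠ 0, rk (A - (A + vecMulVec x q)) = 1 := fun x hx => by
    rw [sub_add_cancel_left, ← neg_vecMulVec]
    exact rk_eq_one_iff.2 ⟨-x, q, neg_ne_zero.2 hx, hq, rfl⟩
  have he₀ : e₀ ≠ 0 := by simp [e₀]
  have he₁ : e₁ ≠ 0 := by simp [e₁]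
  have he₀₁ : e₀ + e₁ ≠ 0 := fun h => by simpa [e₀, e₁] using congrFun h ⟨0, by omega⟩
  refine ⟨_, _, _, hmem e₀, hmem e₁, hmem (e₀ + e₁), ?_, hadj _ he₀, hadj _ he₁, hadj _ he₀₁⟩
  rintro ⟨ℓ, hℓ, h₀, h₁, h₀₁⟩
  obtain ⟨S, hS, hℓS⟩ := hℓ.exists_isTypeOne_superset
  obtain ⟨p, C', -, rfl⟩ := isTypeOne_iff.1 hS
  have hdiff : ∀ {x x'}, A + vecMulVec x q ∈ typeOneSet p C' →
      A + vecMulVec x' q ∈ typeOneSet p C' → ∃ c : D, x - x' = MulOpposite.op c • p :=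
    fun hx hx' => by
      obtain ⟨y, hy⟩ := mem_colMultiples.1 (sub_mem hx hx')
      rw [sub_sub_sub_cancel_right, add_sub_add_left_eq_sub, ← sub_vecMulVec] at hy
      exact exists_eq_op_smul_of_vecMulVec_eq hy.symm hq
  obtain ⟨c, hc⟩ := hdiff (hℓS h₀₁) (hℓS h₁)
  obtain ⟨c', hc'⟩ := hdiff (hℓS h₀₁) (hℓS h₀)
  rw [add_sub_cancel_right] at hc
  rw [add_sub_cancel_left] at hc'
  exact single_ne_smul_of_single_eq_smul (by simp [Fin.ext_iff]) hc _ hc'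

lemma mem_typeOneSet_of_isAdjToNoncollinear [NeZero m] [NeZero n] {p : Fin m → D} (hp : p ≠ 0)
    {C A : Matrix (Fin m) (Fin n) D} (h : IsAdjToNoncollinear (typeOneSet p C) A) :
    A ∈ typeOneSet p C := by
  obtain ⟨B₁, B₂, B₃, h₁, h₂, h₃, hnc, hA₁, hA₂, hA₃⟩ := h
  by_contra hA
  obtain ⟨a, b, ha, hb, hab⟩ := rk_eq_one_iff.1 hA₁
  have hline : ∀ B ∈ typeOneSet p C, rk (A - B) = 1 → B ∈ typeTwoSet b B₁ := by
    intro B hB hAB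
    rcases mem_colMultiples_or_mem_rowMultiples ha hb hAB.le (by
      rw [← hab, sub_sub_sub_cancel_left]; exact (isAdjSet_typeOneSet hp C).rk_sub_le_one h₁ hB)
      with hcol | hrow
    · by_cases hBB₁ : B - B₁ = 0
      · show B - B₁ ∈ rowMultiples b
        rw [hBB₁]
        exact zero_mem _
      -- otherwise `a` is a right multiple of `p`, which would put `A` into the set
      obtain ⟨w, hw⟩ := mem_colMultiples.1 hcol
      obtain ⟨u, hu⟩ := mem_colMultiples.1 (sub_mem hB h₁)
      have hBB₁' : vecMulVec a (b - w) = B - B₁ := by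
        rw [vecMulVec_sub, ← hab, hw, sub_sub_sub_cancel_left]
      rw [sub_sub_sub_cancel_right, ← hBB₁'] at hu
      obtain ⟨c, hc⟩ := exists_eq_op_smul_of_vecMulVec_eq hu.symm
        (vecMulVec_ne_zero_iff.1 (hBB₁' ▸ hBB₁)).2
      refine absurd ?_ hA
      have hAB₁ : A - B₁ ∈ colMultiples p :=
        mem_colMultiples.2 ⟨c • b, by rw [vecMulVec_smul', ← hc, hab]⟩
      simpa [typeOneSet] using add_mem hAB₁ h₁
    · have := sub_mem (mem_rowMultiples.2 ⟨a, hab.symm⟩) hrow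
      rwa [sub_sub_sub_cancel_left] at this
  refine hnc ⟨_, ⟨typeTwoSet b B₁, Or.inl ⟨isTypeOne_iff.2 ⟨p, C, hp, rfl⟩,
    isTypeTwo_iff.2 ⟨b, B₁, hb, rfl⟩⟩, ⟨B₁, h₁, hline B₁ h₁ hA₁⟩, rfl⟩,
    ⟨h₁, hline B₁ h₁ hA₁⟩, ⟨h₂, hline B₂ h₂ hA₂⟩, ⟨h₃, hline B₃ h₃ hA₃⟩⟩

lemma mem_typeTwoSet_of_isAdjToNoncollinear [NeZero m] [NeZero n] {q : Fin n → D} (hq : q ≠ 0)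
    {C A : Matrix (Fin m) (Fin n) D} (h : IsAdjToNoncollinear (typeTwoSet q C) A) :
    A ∈ typeTwoSet q C := by
  obtain ⟨B₁, B₂, B₃, h₁, h₂, h₃, hnc, hA₁, hA₂, hA₃⟩ := h
  by_contra hA
  obtain ⟨a, b, ha, hb, hab⟩ := rk_eq_one_iff.1 hA₁
  have hline : ∀ B ∈ typeTwoSet q C, rk (A - B) = 1 → B ∈ typeOneSet a B₁ := by
    intro B hB hAB
    rcases mem_colMultiples_or_mem_rowMultiples ha hb hAB.le (by
      rw [← hab, sub_sub_sub_cancel_left]; exact (isAdjSet_typeTwoSet hq C).rk_sub_le_one h₁ hB)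
      with hcol | hrow
    · have := sub_mem (mem_colMultiples.2 ⟨b, hab.symm⟩) hcol
      rwa [sub_sub_sub_cancel_left] at this
    · by_cases hBB₁ : B - B₁ = 0
      · show B - B₁ ∈ colMultiples a
        rw [hBB₁]
        exact zero_mem _
      -- otherwise `b` is a left multiple of `q`, which would put `A` into the set
      obtain ⟨x, hx⟩ := mem_rowMultiples.1 hrow
      obtain ⟨u, hu⟩ := mem_rowMultiples.1 (sub_mem hB h₁)
      have hBB₁' : vecMulVec (a - x) b = B - B₁ := by
        rw [sub_vecMulVec, ← hab, hx, sub_sub_sub_cancel_left]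
      rw [sub_sub_sub_cancel_right, ← hBB₁'] at hu
      obtain ⟨c, hc⟩ := exists_eq_smul_of_vecMulVec_eq hu.symm
        (vecMulVec_ne_zero_iff.1 (hBB₁' ▸ hBB₁)).1
      refine absurd ?_ hA
      have hAB₁ : A - B₁ ∈ rowMultiples q :=
        mem_rowMultiples.2 ⟨MulOpposite.op c • a, by rw [← vecMulVec_smul', ← hc, hab]⟩
      simpa [typeTwoSet] using add_mem hAB₁ h₁
  refine hnc ⟨_, ⟨typeOneSet a B₁, Or.inr ⟨isTypeTwo_iff.2 ⟨q, C, hq, rfl⟩,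
    isTypeOne_iff.2 ⟨a, B₁, ha, rfl⟩⟩, ⟨B₁, h₁, hline B₁ h₁ hA₁⟩, rfl⟩,
    ⟨h₁, hline B₁ h₁ hA₁⟩, ⟨h₂, hline B₂ h₂ hA₂⟩, ⟨h₃, hline B₃ h₃ hA₃⟩⟩

end Collinearity

/-- `A` belongs to a maximal set `M` iff `A` is adjacent to three
noncollinear points of `AG(M)` (Lemma `gdkj7ssb33`). -/
theorem stmt14 {D : Type*} [DivisionRing D] {m n : ℕ} (hm : 2 ≤ m) (hn : 2 ≤ n)
    (M : Set (Matrix (Fin m) (Fin n) D)) (hM : IsMaxSet M)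
    (A : Matrix (Fin m) (Fin n) D) :
    A ∈ M ↔ ∃ B₁ B₂ B₃ : Matrix (Fin m) (Fin n) D,
      B₁ ∈ M ∧ B₂ ∈ M ∧ B₃ ∈ M ∧
      (¬ ∃ ℓ, IsLine M ℓ ∧ B₁ ∈ ℓ ∧ B₂ ∈ ℓ ∧ B₃ ∈ ℓ) ∧
      rk (A - B₁) = 1 ∧ rk (A - B₂) = 1 ∧ rk (A - B₃) = 1 := by
  have : NeZero m := ⟨by omega⟩
  have : NeZero n := ⟨by omega⟩
  rcases hM.eq_typeOneSet_or_eq_typeTwoSet with ⟨p, C, hp, rfl⟩ | ⟨q, C, hq, rfl⟩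
  · exact ⟨isAdjToNoncollinear_of_mem_typeOneSet hn hp, mem_typeOneSet_of_isAdjToNoncollinear hp⟩
  · exact ⟨isAdjToNoncollinear_of_mem_typeTwoSet hm hq, mem_typeTwoSet_of_isAdjToNoncollinear hq⟩
end

section
/- Let D and D' be division rings, and let n, m', n' be integers with m', n' ≥ n ≥ 2. Suppose φ : D^{n×n} → D'^{m'×n'} is a graph homomorphism with φ(0) = 0 and rank(φ(I_n)) = n, where I_n is the n×n identity matrix. Then there exist invertible matrices P ∈ GL_{m'}(D') and Q ∈ GL_{n'}(D') such that for every r = 1, …, n, φ(diag(I_r, 0)) = P · diag(I_r, 0_{m'−r, n'−r}) · Q, where diag(I_r, 0) denotes the n×n (respectively m'×n') matrix with the r×r identity in the upper-left corner and zeros elsewhere. -/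
open Matrix Function

/-! The matrices `E_r = diag(I_r, 0)` form a chain `0 = E_0 ∼ E_1 ∼ ⋯ ∼ E_n = I_n`, so every
difference `φ(E_{r+1}) - φ(E_r)` has rank one, say `x_r y_rᵀ`. Telescoping from `φ(0) = 0` gives
`φ(E_r) = X E_r Y`, where `X` has columns `x_r` and `Y` has rows `y_r`. As
`n = rank φ(I_n) = rank (X Y)`, the matrix `X` has a left inverse and `Y` has independent rows;
hence `X` is the first `n` columns of an invertible `P` and `Y` the first `n` rows of an
invertible `Q`, and `P diag(I_r, 0) Q = X E_r Y`. -/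

section Corner

variable {R : Type*} [Semiring R]

theorem corner_one_apply {r m n : ℕ} (i : Fin m) (j : Fin n) :
    (corner (1 : Matrix (Fin r) (Fin r) R) : Matrix (Fin m) (Fin n) R) i j =
      if (i : ℕ) = j ∧ (i : ℕ) < r then 1 else 0 := by
  simp only [corner, of_apply, one_apply, Fin.ext_iff]
  grind

theorem corner_self {m n : ℕ} (A : Matrix (Fin m) (Fin n) R) :
    (corner A : Matrix (Fin m) (Fin n) R) = A := by
  ext i j
  simp [corner]

theorem corner_one_zero {m n : ℕ} :
    (corner (1 : Matrix (Fin 0) (Fin 0) R) : Matrix (Fin m) (Fin n) R) = 0 := by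
  ext i j
  simp [corner_one_apply]

theorem corner_one_succ {r m n : ℕ} (hm : r < m) (hn : r < n) :
    (corner (1 : Matrix (Fin (r + 1)) (Fin (r + 1)) R) : Matrix (Fin m) (Fin n) R) =
      corner (1 : Matrix (Fin r) (Fin r) R) +
        vecMulVec (Pi.single ⟨r, hm⟩ 1) (Pi.single ⟨r, hn⟩ 1) := by
  ext i j
  simp only [Matrix.add_apply, corner_one_apply, vecMulVec_apply, Pi.single_apply, Fin.ext_iff]
  split_ifs <;> simp_all <;> omega

theorem corner_one_mul_corner_one {a b c m k n : ℕ} (hc : min a b = c) (hk : c ≤ k) :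
    (corner (1 : Matrix (Fin a) (Fin a) R) : Matrix (Fin m) (Fin k) R) *
        (corner (1 : Matrix (Fin b) (Fin b) R) : Matrix (Fin k) (Fin n) R) =
      corner (1 : Matrix (Fin c) (Fin c) R) := by
  ext i j
  simp only [mul_apply, corner_one_apply]
  by_cases hik : (i : ℕ) < k
  · rw [Finset.sum_eq_single ⟨i, hik⟩]
    · split_ifs <;> simp_all <;> omega
    · intro x _ hx
      rw [if_neg (fun h => hx (Fin.ext h.1.symm)), zero_mul]
    · simp
  · rw [Finset.sum_eq_zero fun x _ => by rw [if_neg (by omega), zero_mul], if_neg (by omega)]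

theorem corner_one_eq_corner_one_mul_mul {r n m p : ℕ} (hr : r ≤ n) :
    (corner (1 : Matrix (Fin r) (Fin r) R) : Matrix (Fin m) (Fin p) R) =
      (corner (1 : Matrix (Fin n) (Fin n) R) : Matrix (Fin m) (Fin n) R) *
        (corner (1 : Matrix (Fin r) (Fin r) R) : Matrix (Fin n) (Fin n) R) *
          (corner (1 : Matrix (Fin n) (Fin n) R) : Matrix (Fin n) (Fin p) R) := by
  rw [corner_one_mul_corner_one (min_eq_right hr) hr, corner_one_mul_corner_one (min_eq_left hr) hr]

theorem corner_one_mul {n N p : ℕ} (h : n ≤ N) (A : Matrix (Fin N) (Fin p) R) :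
    (corner (1 : Matrix (Fin n) (Fin n) R) : Matrix (Fin n) (Fin N) R) * A =
      A.submatrix (Fin.castLE h) id := by
  ext i j
  have hi : ∀ x : Fin N, (i : ℕ) = x ↔ Fin.castLE h i = x := fun x => by simp [Fin.ext_iff]
  simp [mul_apply, corner_one_apply, hi]

theorem transpose_map_op_mul {l m n : ℕ} (A : Matrix (Fin l) (Fin m) R)
    (B : Matrix (Fin m) (Fin n) R) :
    ((A * B).map MulOpposite.op)ᵀ = (B.map MulOpposite.op)ᵀ * (A.map MulOpposite.op)ᵀ := by
  ext i j
  simp [mul_apply]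

theorem transpose_map_op_corner_one {r m n : ℕ} :
    ((corner (1 : Matrix (Fin r) (Fin r) R) : Matrix (Fin m) (Fin n) R).map MulOpposite.op)ᵀ =
      corner (1 : Matrix (Fin r) (Fin r) Rᵐᵒᵖ) := by
  ext i j
  simp only [transpose_apply, map_apply, corner_one_apply]
  split_ifs <;> simp_all <;> omega

end Corner

theorem linearIndependent_row_of_mul_eq_one {R : Type*} [Semiring R] {ι κ : Type*} [Fintype ι]
    [Fintype κ] [DecidableEq ι] {A : Matrix ι κ R} {B : Matrix κ ι R} (h : A * B = 1) :
    LinearIndependent R A.row :=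
  vecMul_injective_iff.mp fun v w hvw => by
    simpa [vecMul_vecMul, h] using congrArg (· ᵥ* B) hvw

section Rank

variable {K : Type*} [DivisionRing K]

theorem isUnit_of_linearIndependent_row {ι : Type*} [Fintype ι] [DecidableEq ι]
    {A : Matrix ι ι K} (h : LinearIndependent K A.row) : IsUnit A := by
  have hinj : Function.Injective A.vecMulLinear := vecMul_injective_iff.mpr h
  obtain ⟨B, hBA⟩ := vecMul_surjective_iff_exists_left_inverse.mp
    (LinearMap.injective_iff_surjective.mp hinj)
  exact isUnit_iff_exists_inv'.mpr ⟨B, hBA⟩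

variable {m n p : ℕ}

theorem rk_eq_finrank_range_vecMulLinear (A : Matrix (Fin m) (Fin n) K) :
    rk A = Module.finrank K (LinearMap.range A.vecMulLinear) := by
  rw [range_vecMulLinear]
  rfl

theorem rk_le_width (A : Matrix (Fin m) (Fin n) K) : rk A ≤ n :=
  (Submodule.finrank_le _).trans_eq (Module.finrank_fin_fun K)

theorem rk_le_height (A : Matrix (Fin m) (Fin n) K) : rk A ≤ m := by
  simpa [rk_eq_finrank_range_vecMulLinear] using A.vecMulLinear.finrank_range_le

theorem vecMulLinear_mul (A : Matrix (Fin m) (Fin n) K) (B : Matrix (Fin n) (Fin p) K) :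
    (A * B).vecMulLinear = B.vecMulLinear ∘ₗ A.vecMulLinear :=
  LinearMap.ext fun v => (vecMul_vecMul v A B).symm

theorem rk_mul_le_left (A : Matrix (Fin m) (Fin n) K) (B : Matrix (Fin n) (Fin p) K) :
    rk (A * B) ≤ rk A := by
  rw [rk_eq_finrank_range_vecMulLinear, rk_eq_finrank_range_vecMulLinear, vecMulLinear_mul,
    LinearMap.range_comp]
  exact Submodule.finrank_map_le _ _

theorem rk_mul_le_right (A : Matrix (Fin m) (Fin n) K) (B : Matrix (Fin n) (Fin p) K) :
    rk (A * B) ≤ rk B := by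
  rw [rk_eq_finrank_range_vecMulLinear, rk_eq_finrank_range_vecMulLinear, vecMulLinear_mul]
  exact Submodule.finrank_mono (LinearMap.range_comp_le_range _ _)

theorem exists_mul_eq_one_of_rk_eq_width {A : Matrix (Fin m) (Fin n) K} (h : rk A = n) :
    ∃ B : Matrix (Fin n) (Fin m) K, B * A = 1 := by
  rw [rk_eq_finrank_range_vecMulLinear] at h
  have htop : LinearMap.range A.vecMulLinear = ⊤ :=
    Submodule.eq_top_of_finrank_eq (by rw [h, Module.finrank_fin_fun])
  exact vecMul_surjective_iff_exists_left_inverse.mp (LinearMap.range_eq_top.mp htop)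

theorem linearIndependent_row_of_rk_eq_height {A : Matrix (Fin m) (Fin n) K} (h : rk A = m) :
    LinearIndependent K A.row :=
  linearIndependent_iff_card_eq_finrank_span.mpr ((Fintype.card_fin m).trans h.symm)

theorem exists_eq_vecMulVec_of_rk_eq_one {A : Matrix (Fin m) (Fin n) K} (h : rk A = 1) :
    ∃ x y, A = vecMulVec x y := by
  obtain ⟨w, -, hw⟩ := finrank_eq_one_iff'.mp h
  choose c hc using fun i => hw ⟨A i, Submodule.subset_span ⟨i, rfl⟩⟩
  refine ⟨c, w, ext fun i j => ?_⟩
  simpa [vecMulVec_apply] using (congrFun (congrArg Subtype.val (hc i)) j).symm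

theorem rk_vecMulVec_s18 {x : Fin m → K} {y : Fin n → K} (hx : x ≠ 0) (hy : y ≠ 0) :
    rk (vecMulVec x y) = 1 := by
  obtain ⟨i, hi⟩ := Function.ne_iff.mp hx
  have hrow : ∀ i, (vecMulVec x y).row i = x i • y := fun i => rfl
  have hspan : Submodule.span K (Set.range (vecMulVec x y).row) = K ∙ y := by
    refine le_antisymm (Submodule.span_le.mpr ?_) (Submodule.span_le.mpr ?_)
    · rintro _ ⟨i, rfl⟩
      exact Submodule.smul_mem _ _ (Submodule.mem_span_singleton_self y)
    · have hmem := Submodule.smul_mem (Submodule.span K (Set.range (vecMulVec x y).row))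
        (x i)⁻¹ (Submodule.subset_span ⟨i, rfl⟩)
      rw [hrow, inv_smul_smul₀ hi] at hmem
      exact Set.singleton_subset_iff.mpr hmem
  change Module.finrank K (Submodule.span K (Set.range (vecMulVec x y).row)) = 1
  rw [hspan, finrank_span_singleton hy]

end Rank

theorem Module.Basis.sumExtend_apply_inl {K V ι : Type*} [DivisionRing K] [AddCommGroup V]
    [Module K V] {v : ι → V} (hv : LinearIndependent K v) (i : ι) :
    Basis.sumExtend hv (Sum.inl i) = v i := by
  simp [Basis.sumExtend]
  rfl

theorem exists_finEquiv_sum_apply_castLE {S : Type*} [Finite S] {n N : ℕ}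
    (hN : n + Nat.card S = N) :
    ∃ e : Fin N ≃ Fin n ⊕ S, ∀ k : Fin n, e (Fin.castLE (by omega) k) = Sum.inl k := by
  refine ⟨(finCongr hN.symm).trans
    (finSumFinEquiv.symm.trans ((Equiv.refl _).sumCongr (Finite.equivFin S).symm)), fun k => ?_⟩
  have hk : finCongr hN.symm (Fin.castLE (by omega) k) = Fin.castAdd (Nat.card S) k := Fin.ext rfl
  simp [hk]

section Extension

variable {K : Type*} [DivisionRing K] {n N : ℕ}

theorem exists_isUnit_corner_one_mul_eq (h : n ≤ N) {Y : Matrix (Fin n) (Fin N) K}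
    (hY : LinearIndependent K Y.row) :
    ∃ Q : Matrix (Fin N) (Fin N) K, IsUnit Q ∧
      (corner (1 : Matrix (Fin n) (Fin n) K) : Matrix (Fin n) (Fin N) K) * Q = Y := by
  let b := Module.Basis.sumExtend hY
  have : Finite (Module.Basis.sumExtendIndex hY) :=
    have := Module.Finite.finite_basis b
    Finite.of_injective (Sum.inr (α := Fin n)) Sum.inr_injective
  have hcard : n + Nat.card (Module.Basis.sumExtendIndex hY) = N := by
    simpa [Nat.card_sum] using (Module.finrank_eq_nat_card_basis b).symm
  obtain ⟨e, he⟩ := exists_finEquiv_sum_apply_castLE hcard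
  refine ⟨of fun i => b (e i),
    isUnit_of_linearIndependent_row (b.linearIndependent.comp e e.injective), ?_⟩
  ext k j
  simp [corner_one_mul h, he, b, Module.Basis.sumExtend_apply_inl]

theorem exists_isUnit_mul_corner_one_eq (h : n ≤ N) {X : Matrix (Fin N) (Fin n) K}
    {Z : Matrix (Fin n) (Fin N) K} (hZX : Z * X = 1) :
    ∃ P : Matrix (Fin N) (Fin N) K, IsUnit P ∧
      P * (corner (1 : Matrix (Fin n) (Fin n) K) : Matrix (Fin N) (Fin n) K) = X := by
  -- Over `Kᵐᵒᵖ` the columns of `X` become the rows of its transpose, and `Z` a right inverse.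
  have hXop : LinearIndependent Kᵐᵒᵖ (X.map MulOpposite.op)ᵀ.row :=
    linearIndependent_row_of_mul_eq_one (B := (Z.map MulOpposite.op)ᵀ)
      (by rw [← transpose_map_op_mul, hZX]; simp)
  obtain ⟨Q, hQ, hQX⟩ := exists_isUnit_corner_one_mul_eq h hXop
  refine ⟨(Q.map MulOpposite.unop)ᵀ, ?_, ?_⟩
  · have hQ' := hQ.map RingEquiv.mopMatrix
    rwa [RingEquiv.mopMatrix_apply, isUnit_op, transpose_map] at hQ'
  · apply transpose_injective.comp (map_injective MulOpposite.op_injective)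
    have hQQ : ((Q.map MulOpposite.unop)ᵀ.map MulOpposite.op)ᵀ = Q := by ext; rfl
    simp only [Function.comp_apply, transpose_map_op_mul, transpose_map_op_corner_one, hQQ, hQX]

end Extension

theorem IsGraphHom.exists_apply_corner_one_eq_mul_mul {D D' : Type*} [DivisionRing D]
    [DivisionRing D'] {n m' n' : ℕ} {φ : Matrix (Fin n) (Fin n) D → Matrix (Fin m') (Fin n') D'}
    (hhom : IsGraphHom φ) (h0 : φ 0 = 0) :
    ∃ (X : Matrix (Fin m') (Fin n) D') (Y : Matrix (Fin n) (Fin n') D'), ∀ r ≤ n,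
      φ (corner (1 : Matrix (Fin r) (Fin r) D)) =
        X * (corner (1 : Matrix (Fin r) (Fin r) D') : Matrix (Fin n) (Fin n) D') * Y := by
  have hstep (k : Fin n) : rk (φ (corner (1 : Matrix (Fin (k + 1)) (Fin (k + 1)) D)) -
      φ (corner (1 : Matrix (Fin k) (Fin k) D))) = 1 := by
    refine hhom _ _ ?_
    rw [corner_one_succ k.2 k.2, add_sub_cancel_left]
    exact rk_vecMulVec_s18 (by simp) (by simp)
  choose x y hxy using fun k => exists_eq_vecMulVec_of_rk_eq_one (hstep k)
  refine ⟨(of x)ᵀ, of y, fun r hr => ?_⟩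
  induction r with
  | zero => rw [corner_one_zero, corner_one_zero, h0, Matrix.mul_zero, Matrix.zero_mul]
  | succ r ih =>
    rw [← sub_add_cancel (φ _) (φ (corner (1 : Matrix (Fin r) (Fin r) D))), hxy ⟨r, hr⟩,
      ih (by omega), corner_one_succ hr hr, Matrix.mul_add, Matrix.add_mul, mul_vecMulVec,
      vecMulVec_mul, mulVec_single_one, single_one_vecMul, add_comm]
    rfl

theorem stmt18_general {D D' : Type*} [DivisionRing D] [DivisionRing D'] {n m' n' : ℕ}
    (hm' : n ≤ m') (hn' : n ≤ n')
    (φ : Matrix (Fin n) (Fin n) D → Matrix (Fin m') (Fin n') D')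
    (hhom : IsGraphHom φ) (h0 : φ 0 = 0)
    (hI : rk (φ (1 : Matrix (Fin n) (Fin n) D)) = n) :
    ∃ (P : Matrix (Fin m') (Fin m') D') (Q : Matrix (Fin n') (Fin n') D'),
      IsUnit P ∧ IsUnit Q ∧
      ∀ r : ℕ, 1 ≤ r → r ≤ n →
        φ (corner (1 : Matrix (Fin r) (Fin r) D)) =
          P * (corner (1 : Matrix (Fin r) (Fin r) D') : Matrix (Fin m') (Fin n') D') * Q := by
  obtain ⟨X, Y, hφ⟩ := hhom.exists_apply_corner_one_eq_mul_mul h0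
  have hXY : rk (X * Y) = n := by
    rwa [← corner_self (1 : Matrix (Fin n) (Fin n) D), hφ n le_rfl, corner_self,
      Matrix.mul_one] at hI
  obtain ⟨Z, hZX⟩ := exists_mul_eq_one_of_rk_eq_width
    (le_antisymm (rk_le_width X) (hXY.ge.trans (rk_mul_le_left X Y)))
  obtain ⟨P, hP, hPX⟩ := exists_isUnit_mul_corner_one_eq hm' hZX
  obtain ⟨Q, hQ, hQY⟩ := exists_isUnit_corner_one_mul_eq hn' (linearIndependent_row_of_rk_eq_height
    (le_antisymm (rk_le_height Y) (hXY.ge.trans (rk_mul_le_right X Y))))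
  refine ⟨P, Q, hP, hQ, fun r _ hr => ?_⟩
  rw [hφ r hr, corner_one_eq_corner_one_mul_mul (m := m') (p := n') hr, ← hPX, ← hQY]
  simp only [Matrix.mul_assoc]

/-- (Lemma `strong-degenerate-1`) normalisation of the images of the
matrices `diag(I_r, 0)` for `r = 1, …, n`. -/
theorem stmt18 {D D' : Type*} [DivisionRing D] [DivisionRing D'] {n m' n' : ℕ}
    (hn : 2 ≤ n) (hm' : n ≤ m') (hn' : n ≤ n')
    (φ : Matrix (Fin n) (Fin n) D → Matrix (Fin m') (Fin n') D')
    (hhom : IsGraphHom φ) (h0 : φ 0 = 0)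
    (hI : rk (φ (1 : Matrix (Fin n) (Fin n) D)) = n) :
    ∃ (P : Matrix (Fin m') (Fin m') D') (Q : Matrix (Fin n') (Fin n') D'),
      IsUnit P ∧ IsUnit Q ∧
      ∀ r : ℕ, 1 ≤ r → r ≤ n →
        φ (corner (1 : Matrix (Fin r) (Fin r) D)) =
          P * (corner (1 : Matrix (Fin r) (Fin r) D') : Matrix (Fin m') (Fin n') D') * Q :=
  stmt18_general hm' hn' φ hhom h0 hI
end
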